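/- arXiv:2412.08342 — 3 statements merged into one kernel-verified Lean document; each statement's English description precedes it below -/
import Mathlib

section
/- Let 𝓡 be a rich single-crossing domain of CM preferences and let F : 𝓡 → Z be a strategy-proof mechanism. Then F is monotone with respect to the cutting-from-above order ≺: for all R', R'' ∈ 𝓡, if R' ≺ R'' then F(R') ≤ F(R''), where (t',q') ≤ (t'',q'') means either (t',q') = (t'',q'') or both t' < t'' and q' < q''. -/
open Set MeasureTheory Filter Topology
open scoped ENNReal

noncomputable section

abbrev Bundle : Type := ℝ × ℝ

/-- The set of allocations Z = [0,∞) × [0,1]. -/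
def Z : Set Bundle := {p | 0 ≤ p.1 ∧ p.2 ∈ Set.Icc (0:ℝ) 1}

/-- A CM (continuous, monotone) preference on Z. -/
structure CMPref where
  R : Bundle → Bundle → Prop
  total : ∀ x ∈ Z, ∀ y ∈ Z, R x y ∨ R y x
  trans : ∀ x y z : Bundle, R x y → R y z → R x z
  moneyMono : ∀ t' t'' q : ℝ, (t', q) ∈ Z → (t'', q) ∈ Z → t' < t'' →
    R (t', q) (t'', q) ∧ ¬ R (t'', q) (t', q)
  qMono : ∀ t q' q'' : ℝ, (t, q') ∈ Z → (t, q'') ∈ Z → q' < q'' →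
    R (t, q'') (t, q') ∧ ¬ R (t, q') (t, q'')
  contUC : ∀ z ∈ Z, IsClosed {x | x ∈ Z ∧ R x z}
  contLC : ∀ z ∈ Z, IsClosed {x | x ∈ Z ∧ R z x}

/-- Indifference. -/
def CMPref.I (p : CMPref) (x y : Bundle) : Prop := p.R x y ∧ p.R y x

/-- Indifference class of x. -/
def IC (p : CMPref) (x : Bundle) : Set Bundle := {y | y ∈ Z ∧ p.I y x}

/-- Single-crossing property of two preferences. -/
def SingleCrossing (p p' : CMPref) : Prop :=
  ∀ x y z : Bundle, z ∈ IC p x ∩ IC p' y → IC p x ∩ IC p' y = {z}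

/-- x ≤ y on bundles: equal, or strictly smaller in both coordinates. -/
def bleq (x y : Bundle) : Prop := x = y ∨ (x.1 < y.1 ∧ x.2 < y.2)

/-- □(z) = bundles (in Z) below z. -/
def square (z : Bundle) : Set Bundle := {x | x ∈ Z ∧ bleq x z}

/-- Upper contour set within Z. -/
def UC (p : CMPref) (z : Bundle) : Set Bundle := {x | x ∈ Z ∧ p.R x z}

/-- p'' cuts p' from above at z. -/
def CutsAt (p' p'' : CMPref) (z : Bundle) : Prop :=
  square z ∩ UC p'' z ⊆ square z ∩ UC p' z

/-- p' ≺ p'' : p'' cuts p' from above at every bundle (and they are distinct). -/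
def Prec (p' p'' : CMPref) : Prop := p' ≠ p'' ∧ ∀ z ∈ Z, CutsAt p' p'' z

/-- p ≼ p'. -/
def PrecEq (p p' : CMPref) : Prop := Prec p p' ∨ p = p'

/-- Rich single-crossing domain. -/
def RichSC (D : Set CMPref) : Prop :=
  (∀ p ∈ D, ∀ p' ∈ D, p ≠ p' → SingleCrossing p p') ∧
  (∀ x ∈ Z, ∀ y ∈ Z, x.1 < y.1 → x.2 < y.2 → ∃ p ∈ D, p.I x y)

/-- Closed interval [a,b] within the domain D. -/
def OrdInterval (D : Set CMPref) (a b : CMPref) : Set CMPref :=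
  {p | p ∈ D ∧ PrecEq a p ∧ PrecEq p b}

/-- Strategy-proofness on a set of preferences. -/
def StrategyProofOn (S : Set CMPref) (F : CMPref → Bundle) : Prop :=
  ∀ p ∈ S, ∀ p' ∈ S, p.R (F p) (F p')

/-- Individual rationality on a set of preferences. -/
def IROn (S : Set CMPref) (F : CMPref → Bundle) : Prop :=
  ∀ p ∈ S, p.R (F p) ((0:ℝ), (0:ℝ))

/-- Reflexivity of a CM preference on Z. -/
lemma CMPref.refl (p : CMPref) {x : Bundle} (hx : x ∈ Z) : p.R x x :=
  (p.total x hx x hx).elim id id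

/-- If x weakly dominates y (less money, more quality) and x ≠ y, every CM
preference strictly prefers x to y. -/
lemma CMPref.dom_strict (p : CMPref) {x y : Bundle} (hx : x ∈ Z) (hy : y ∈ Z)
    (h1 : x.1 ≤ y.1) (h2 : y.2 ≤ x.2) (hne : x ≠ y) : p.R x y ∧ ¬ p.R y x := by
  have hmZ : ((x.1, y.2) : Bundle) ∈ Z := ⟨hx.1, hy.2⟩
  rcases eq_or_lt_of_le h1 with h1e | h1l
  · rcases eq_or_lt_of_le h2 with h2e | h2l
    · exact absurd (Prod.ext h1e h2e.symm) hne
    · have := p.qMono x.1 y.2 x.2 hmZ hx h2l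
      rw [show ((x.1, x.2):Bundle) = x from rfl] at this
      rw [show ((x.1, y.2):Bundle) = y by rw [h1e]] at this
      exact this
  · rcases eq_or_lt_of_le h2 with h2e | h2l
    · have := p.moneyMono x.1 y.1 x.2 hx (by rw [← h2e]; exact hy) h1l
      rw [show ((x.1, x.2):Bundle) = x from rfl] at this
      rw [show ((y.1, x.2):Bundle) = y by rw [← h2e]] at this
      exact this
    · have hA := p.qMono x.1 y.2 x.2 hmZ hx h2l
      have hB := p.moneyMono x.1 y.1 y.2 hmZ hy h1l
      rw [show ((x.1, x.2):Bundle) = x from rfl] at hA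
      rw [show ((y.1, y.2):Bundle) = y from rfl] at hB
      refine ⟨p.trans _ _ _ hA.1 hB.1, fun h => hB.2 (p.trans _ _ _ h hA.1)⟩

theorem stmt3 (D : Set CMPref) (hD : RichSC D) (F : CMPref → Bundle)
    (hFZ : ∀ p ∈ D, F p ∈ Z) (hSP : StrategyProofOn D F) :
    ∀ p ∈ D, ∀ p' ∈ D, Prec p p' → bleq (F p) (F p') := by
  intro p hp p' hp' hprec
  have hx : F p ∈ Z := hFZ p hp
  have hy : F p' ∈ Z := hFZ p' hp'
  have hxy : p.R (F p) (F p') := hSP p hp p' hp'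
  have hyx : p'.R (F p') (F p) := hSP p' hp' p hp
  by_cases heq : F p = F p'
  · exact Or.inl heq
  rcases lt_trichotomy (F p).1 (F p').1 with h1 | h1 | h1
  · by_cases h2 : (F p).2 < (F p').2
    · exact Or.inr ⟨h1, h2⟩
    · exact absurd hyx (CMPref.dom_strict p' hx hy h1.le (not_lt.mp h2) heq).2
  · by_cases h2 : (F p).2 ≤ (F p').2
    · exact absurd hxy (CMPref.dom_strict p hy hx h1.ge h2 (Ne.symm heq)).2
    · exact absurd hyx (CMPref.dom_strict p' hx hy h1.le (not_le.mp h2).le heq).2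
  · by_cases h2 : (F p).2 ≤ (F p').2
    · exact absurd hxy (CMPref.dom_strict p hy hx h1.le h2 (Ne.symm heq)).2
    · -- F p' strictly below F p in both coordinates: derive a contradiction
      exfalso
      have hy1 : (F p').1 < (F p).1 := h1
      have hy2 : (F p').2 < (F p).2 := not_le.mp h2
      have hysq : F p' ∈ square (F p) := ⟨hy, Or.inr ⟨hy1, hy2⟩⟩
      have hpyx : p.R (F p') (F p) :=
        ((hprec.2 (F p) hx) ⟨hysq, hy, hyx⟩).2.2
      -- p' strictly prefers F p' to F p (else single-crossing is violated)
      have hnp'xy : ¬ p'.R (F p) (F p') := by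
        intro hcontra
        have hSC := hD.1 p hp p' hp' hprec.1
        have hxmem : F p ∈ IC p (F p) ∩ IC p' (F p) :=
          ⟨⟨hx, CMPref.refl p hx, CMPref.refl p hx⟩,
           ⟨hx, CMPref.refl p' hx, CMPref.refl p' hx⟩⟩
        have hset := hSC (F p) (F p) (F p) hxmem
        have hymem : F p' ∈ IC p (F p) ∩ IC p' (F p) :=
          ⟨⟨hy, hpyx, hxy⟩, ⟨hy, hyx, hcontra⟩⟩
        rw [hset] at hymem
        exact (ne_of_lt hy1) (by rw [hymem])
      -- use continuity of the lower contour set of p' at F p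
      have hclosed : IsClosed {w | w ∈ Z ∧ p'.R (F p) w} := p'.contLC (F p) hx
      have hopen := hclosed.isOpen_compl
      have hymemc : F p' ∈ {w | w ∈ Z ∧ p'.R (F p) w}ᶜ := fun hmem => hnp'xy hmem.2
      obtain ⟨ε, hε, hball⟩ := Metric.isOpen_iff.mp hopen (F p') hymemc
      set δ : ℝ := min (ε/2) (((F p).1 - (F p').1)/2) with hδdef
      have hδpos : 0 < δ := lt_min (by linarith) (by linarith)
      have hδlt : (F p').1 + δ < (F p).1 := by
        have : δ ≤ ((F p).1 - (F p').1)/2 := min_le_right _ _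
        linarith
      set y' : Bundle := ((F p').1 + δ, (F p').2) with hy'def
      have hy'Z : y' ∈ Z := ⟨by simp only [hy'def]; linarith [hy.1], hy.2⟩
      have hdist : dist y' (F p') < ε := by
        rw [Prod.dist_eq]
        have h1' : dist ((F p').1 + δ) (F p').1 = δ := by
          rw [Real.dist_eq]; simp [abs_of_pos hδpos]
        have h2' : dist (F p').2 (F p').2 = 0 := dist_self _
        simp only [hy'def, h1', h2']
        have : δ ≤ ε/2 := min_le_left _ _
        rw [max_eq_left hδpos.le]
        linarith
      have hy'notS : y' ∈ {w | w ∈ Z ∧ p'.R (F p) w}ᶜ := hball (Metric.mem_ball.mpr hdist)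
      have hnxy' : ¬ p'.R (F p) y' := fun h => hy'notS ⟨hy'Z, h⟩
      have hy'x : p'.R y' (F p) := (p'.total y' hy'Z (F p) hx).resolve_right hnxy'
      have hy'sq : y' ∈ square (F p) := ⟨hy'Z, Or.inr ⟨hδlt, hy2⟩⟩
      have hpy'x : p.R y' (F p) := ((hprec.2 (F p) hx) ⟨hy'sq, hy'Z, hy'x⟩).2.2
      have hpy'y : p.R y' (F p') := p.trans _ _ _ hpy'x hxy
      exact (p.moneyMono (F p').1 ((F p').1 + δ) (F p').2 hy hy'Z (by linarith)).2 hpy'y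
end
end

section
/- Let 𝓡 = [R̲, R̄] be a closed interval of a rich single-crossing domain and let F = (t_F, q_F) be a strategy-proof and individually rational mechanism on 𝓡 with F(R̲) = (0,0). Suppose R̲ ≺ R¹ ≺ … ≺ R^m ≺ R̄ are finitely many preferences, and R^{1*}, …, R^{(m+1)*} are chosen so that R̲ ≼ R^{1*} ≼ R¹ ≼ R^{2*} ≼ … ≼ R^{m} ≼ R^{(m+1)*} ≼ R̄ and (0,0) I^{1*} F(R¹), F(R¹) I^{2*} F(R²), …, F(R^{m-1}) I^{m*} F(R^m), F(R^m) I^{(m+1)*} F(R̄), where I^{k*} denotes indifference under R^{k*}. Define the finite-range mechanism G by G(R) = (0,0) on [R̲, R^{1*}), G(R) = F(R^k) on [R^{k*}, R^{(k+1)*}) for k = 1, …, m, and G(R) = F(R̄) on [R^{(m+1)*}, R̄]. Then G is strategy-proof and individually rational. -/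
open Set MeasureTheory Filter Topology
open scoped ENNReal

noncomputable section

/-!
Bundles are `(payment, probability)`. Two facts about single-crossing preferences carry the
argument.

Distinct single-crossing types `p`, `q` are comparable in the cutting order. Left of a bundle `z`,
one of the two indifference curves through `z` runs above the other. Which one does is witnessed
by strict preferences, so it persists near `z`; and it is well defined, because the sign of the
comparison cannot change along a connected arc of one curve without creating a second crossing.
So it is constant on the connected quadrant of positive bundles. But if `q` fails to cut `p` from
above at some bundle, the `p`-curve runs above there, and if `p` fails to cut `q` from above
somewhere, the `q`-curve runs above there; so the two failures cannot both occur.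

If `x ≤ y` are indifferent for `r`, every type above `r` weakly prefers `y` and every type below
`r` weakly prefers `x`. The bundles `(0,0) ≤ F(R¹) ≤ … ≤ F(Rᵐ) ≤ F(R̄)`, monotone because `F` is
strategy-proof, are linked by the indifferences of the thresholds `R^{k*}`, so a type between
`R^{k*}` and `R^{(k+1)*}` prefers its bundle to each other one by chaining this fact.
-/

lemma mk_mem_Z_of_mem_Icc {x y : Bundle} (hx : x ∈ Z) (hy : y ∈ Z) {t s : ℝ} (ht : 0 ≤ t)
    (hs : s ∈ Icc x.2 y.2) : ((t, s) : Bundle) ∈ Z :=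
  ⟨ht, hx.2.1.trans hs.1, hs.2.trans hy.2.2⟩

namespace CMPref

variable (p : CMPref) {x y z : Bundle}

lemma R_refl (hx : x ∈ Z) : p.R x x := (p.total x hx x hx).elim id id

lemma R_of_not_R (hx : x ∈ Z) (hy : y ∈ Z) (h : ¬ p.R x y) : p.R y x :=
  (p.total x hx y hy).resolve_left h

lemma I_trans {u : Bundle} (hxy : p.I x y) (hyz : p.I y u) : p.I x u :=
  ⟨p.trans _ _ _ hxy.1 hyz.1, p.trans _ _ _ hyz.2 hxy.2⟩

lemma R_of_le_of_le (hx : x ∈ Z) (hy : y ∈ Z) (h₁ : x.1 ≤ y.1) (h₂ : y.2 ≤ x.2) : p.R x y := by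
  have hm : ((x.1, y.2) : Bundle) ∈ Z := ⟨hx.1, hy.2⟩
  have hxm : p.R x (x.1, y.2) := by
    rcases h₂.lt_or_eq with h₂ | h₂
    · exact (p.qMono x.1 y.2 x.2 hm hx h₂).1
    · rw [h₂]; exact p.R_refl hx
  have hmy : p.R (x.1, y.2) y := by
    rcases h₁.lt_or_eq with h₁ | h₁
    · exact (p.moneyMono x.1 y.1 y.2 hm hy h₁).1
    · rw [h₁]; exact p.R_refl hy
  exact p.trans _ _ _ hxm hmy

lemma eq_of_R_of_le_of_le (hx : x ∈ Z) (hy : y ∈ Z) (h₁ : x.1 ≤ y.1) (h₂ : y.2 ≤ x.2)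
    (h : p.R y x) : x = y := by
  have hm : ((x.1, y.2) : Bundle) ∈ Z := ⟨hx.1, hy.2⟩
  by_contra hne
  rcases h₁.lt_or_eq with h₁ | h₁
  · refine (p.moneyMono x.1 y.1 y.2 hm hy h₁).2 (p.trans _ _ _ h ?_)
    exact p.R_of_le_of_le hx hm le_rfl h₂
  · have h₂ : y.2 < x.2 := h₂.lt_of_ne fun h₂ => hne (Prod.ext h₁ h₂.symm)
    refine (p.qMono x.1 y.2 x.2 hm hx h₂).2 ?_
    rwa [show ((x.1, y.2) : Bundle) = y from Prod.ext h₁ rfl]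

lemma not_R_of_le_of_le (hx : x ∈ Z) (hy : y ∈ Z) (h₁ : x.1 ≤ y.1) (h₂ : y.2 ≤ x.2)
    (hne : x ≠ y) : ¬ p.R y x :=
  fun h => hne (p.eq_of_R_of_le_of_le hx hy h₁ h₂ h)

lemma snd_lt_of_I (hx : x ∈ Z) (hz : z ∈ Z) (hI : p.I x z) (h₁ : x.1 < z.1) : x.2 < z.2 := by
  by_contra! h₂
  exact h₁.ne (congrArg Prod.fst (p.eq_of_R_of_le_of_le hx hz h₁.le h₂ hI.2))

lemma eq_of_I_of_fst_eq (hx : x ∈ Z) (hy : y ∈ Z) (hI : p.I x y) (h₁ : x.1 = y.1) : x = y := by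
  rcases le_total x.2 y.2 with h₂ | h₂
  · exact (p.eq_of_R_of_le_of_le hy hx h₁.ge h₂ hI.1).symm
  · exact p.eq_of_R_of_le_of_le hx hy h₁.le h₂ hI.2

lemma exists_I_of_R_of_R {t s₁ s₂ : ℝ} (hz : z ∈ Z) (hs : s₁ ≤ s₂) (h₁ : ((t, s₁) : Bundle) ∈ Z)
    (h₂ : ((t, s₂) : Bundle) ∈ Z) (hlow : p.R z (t, s₁)) (hhigh : p.R (t, s₂) z) :
    ∃ s ∈ Icc s₁ s₂, p.I (t, s) z := by
  have hcont : Continuous fun s : ℝ => ((t, s) : Bundle) := by fun_prop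
  have hcover : Icc s₁ s₂ ⊆ (fun s => ((t, s) : Bundle)) ⁻¹' {x | x ∈ Z ∧ p.R x z} ∪
      (fun s => ((t, s) : Bundle)) ⁻¹' {x | x ∈ Z ∧ p.R z x} := fun s hs' => by
    have hsZ : ((t, s) : Bundle) ∈ Z := mk_mem_Z_of_mem_Icc h₁ h₂ h₁.1 hs'
    exact (p.total _ hsZ z hz).imp (⟨hsZ, ·⟩) (⟨hsZ, ·⟩)
  obtain ⟨s, hs', hA, hB⟩ := isPreconnected_closed_iff.mp isPreconnected_Icc _ _
    ((p.contUC z hz).preimage hcont) ((p.contLC z hz).preimage hcont) hcover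
    ⟨s₂, right_mem_Icc.2 hs, h₂, hhigh⟩ ⟨s₁, left_mem_Icc.2 hs, h₁, hlow⟩
  exact ⟨s, hs', hA.2, hB.2⟩

lemma exists_I_fst_eq {a : Bundle} (ha : a ∈ Z) (hz : z ∈ Z) (hI : p.I a z) (ha₁ : a.1 < z.1)
    {t : ℝ} (ht : t ∈ Icc a.1 z.1) : ∃ s ∈ Icc a.2 z.2, p.I (t, s) z := by
  have h0 : 0 ≤ t := ha.1.trans ht.1
  have ha₂ := p.snd_lt_of_I ha hz hI ha₁
  refine p.exists_I_of_R_of_R hz ha₂.le ⟨h0, ha.2⟩ ⟨h0, hz.2⟩ ?_ ?_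
  · exact p.trans _ _ _ hI.2 (p.R_of_le_of_le ha ⟨h0, ha.2⟩ ht.1 le_rfl)
  · exact p.R_of_le_of_le ⟨h0, hz.2⟩ hz ht.2 le_rfl

end CMPref

lemma exists_mem_Ioo_mk_mem_of_mem_nhds {Y : Type*} [TopologicalSpace Y] {O : Set (ℝ × Y)}
    {x : ℝ × Y} (hO : O ∈ 𝓝 x) {a b : ℝ} (hab : a < b) (hx : x.1 ∈ Icc a b) :
    ∃ t ∈ Ioo a b, (t, x.2) ∈ O := by
  have hline : {t : ℝ | (t, x.2) ∈ O} ∈ 𝓝 x.1 :=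
    (continuous_id.prodMk continuous_const).continuousAt.preimage_mem_nhds (by simpa using hO)
  rw [← closure_Ioo hab.ne, mem_closure_iff_nhds] at hx
  obtain ⟨t, ht, ht'⟩ := hx _ hline
  exact ⟨t, ht', ht⟩

lemma IsCompact.isPreconnected_of_injOn {X Y : Type*} [TopologicalSpace X] [TopologicalSpace Y]
    [T2Space Y] {K : Set X} {g : X → Y} (hK : IsCompact K) (hg : Continuous g) (hinj : InjOn g K)
    (hpc : IsPreconnected (g '' K)) : IsPreconnected K := by
  refine isPreconnected_closed_iff.mpr fun A B hA hB hcover ⟨a, haK, haA⟩ ⟨b, hbK, hbB⟩ => ?_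
  have hclosed : ∀ {C : Set X}, IsClosed C → IsClosed (g '' (K ∩ C)) :=
    fun hC => ((hK.inter_right hC).image hg).isClosed
  have hcover' : g '' K ⊆ g '' (K ∩ A) ∪ g '' (K ∩ B) := by
    rintro _ ⟨x, hx, rfl⟩
    rcases hcover hx with h | h
    exacts [Or.inl ⟨x, ⟨hx, h⟩, rfl⟩, Or.inr ⟨x, ⟨hx, h⟩, rfl⟩]
  obtain ⟨_, -, ⟨x, ⟨hxK, hxA⟩, rfl⟩, ⟨y, ⟨hyK, hyB⟩, hxy⟩⟩ :=
    isPreconnected_closed_iff.mp hpc _ _ (hclosed hA) (hclosed hB) hcover'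
      ⟨g a, ⟨a, haK, rfl⟩, a, ⟨haK, haA⟩, rfl⟩ ⟨g b, ⟨b, hbK, rfl⟩, b, ⟨hbK, hbB⟩, rfl⟩
  exact ⟨x, hxK, hxA, hinj hyK hxK hxy ▸ hyB⟩

lemma SingleCrossing.symm {p q : CMPref} (h : SingleCrossing p q) : SingleCrossing q p :=
  fun x y z hz => by rw [inter_comm] at hz ⊢; exact h y x z hz

lemma SingleCrossing.eq_of_I_of_I {p q : CMPref} (h : SingleCrossing p q) {u z : Bundle}
    (hu : u ∈ Z) (hz : z ∈ Z) (hp : p.I u z) (hq : q.I u z) : u = z := by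
  have hzz : z ∈ IC p z ∩ IC q z :=
    ⟨⟨hz, p.R_refl hz, p.R_refl hz⟩, hz, q.R_refl hz, q.R_refl hz⟩
  have hu' : u ∈ IC p z ∩ IC q z := ⟨⟨hu, hp⟩, hu, hq⟩
  rwa [h z z z hzz] at hu'

def indiffArc (p : CMPref) (z : Bundle) (a b : ℝ) : Set Bundle :=
  {x | x ∈ Z ∧ p.I x z ∧ x.1 ∈ Icc a b}

lemma isPreconnected_indiffArc {p : CMPref} {z u : Bundle} (hz : z ∈ Z) (hu : u ∈ Z)
    (hI : p.I u z) {b : ℝ} (hub : u.1 ≤ b) (hb : b < z.1) :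
    IsPreconnected (indiffArc p z u.1 b) := by
  have hclosed : IsClosed (indiffArc p z u.1 b) := by
    have := ((p.contUC z hz).inter (p.contLC z hz)).inter
      (isClosed_Icc.preimage continuous_fst : IsClosed (Prod.fst ⁻¹' Icc u.1 b))
    convert this using 1
    ext x
    simp only [indiffArc, CMPref.I, mem_ofPred_eq, mem_inter_iff, mem_preimage]
    tauto
  have hcompact : IsCompact (indiffArc p z u.1 b) :=
    (isCompact_Icc.prod isCompact_Icc).of_isClosed_subset hclosed
      fun x hx => ⟨⟨hx.1.1, hx.2.2.2⟩, hx.1.2⟩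
  have hinj : InjOn Prod.fst (indiffArc p z u.1 b) := fun x hx y hy hxy =>
    p.eq_of_I_of_fst_eq hx.1 hy.1 (p.I_trans hx.2.1 ⟨hy.2.1.2, hy.2.1.1⟩) hxy
  have himage : Prod.fst '' indiffArc p z u.1 b = Icc u.1 b := by
    refine (image_subset_iff.2 fun x hx => hx.2.2).antisymm fun t ht => ?_
    obtain ⟨s, hs, hIs⟩ := p.exists_I_fst_eq hu hz hI (hub.trans_lt hb) ⟨ht.1, ht.2.trans hb.le⟩
    exact ⟨(t, s), ⟨mk_mem_Z_of_mem_Icc hu hz (hu.1.trans ht.1) hs, hIs, ht⟩, rfl⟩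
  exact hcompact.isPreconnected_of_injOn continuous_fst hinj (himage ▸ isPreconnected_Icc)

lemma SingleCrossing.R_iff_R_of_I {p q : CMPref} (hsc : SingleCrossing p q) {z u v : Bundle}
    (hz : z ∈ Z) (hu : u ∈ Z) (hv : v ∈ Z) (hIu : p.I u z) (hIv : p.I v z) (hu₁ : u.1 < z.1)
    (hv₁ : v.1 < z.1) : q.R z u ↔ q.R z v := by
  wlog huv : u.1 ≤ v.1 generalizing u v
  · exact (this hv hu hIv hIu hv₁ hu₁ (le_of_not_ge huv)).symm
  have hC := isPreconnected_closed_iff.mp (isPreconnected_indiffArc hz hu hIu huv hv₁)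
    _ _ (q.contUC z hz) (q.contLC z hz)
    fun x hx => (q.total x hx.1 z hz).imp (⟨hx.1, ·⟩) (⟨hx.1, ·⟩)
  have huC : u ∈ indiffArc p z u.1 v.1 := ⟨hu, hIu, le_rfl, huv⟩
  have hvC : v ∈ indiffArc p z u.1 v.1 := ⟨hv, hIv, huv, le_rfl⟩
  have hnot :
      ¬ (indiffArc p z u.1 v.1 ∩ ({x | x ∈ Z ∧ q.R x z} ∩ {x | x ∈ Z ∧ q.R z x})).Nonempty :=
    fun ⟨c, hc, hcA, hcB⟩ => (hc.2.2.2.trans_lt hv₁).ne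
      (congrArg Prod.fst (hsc.eq_of_I_of_I hc.1 hz hc.2.1 ⟨hcA.2, hcB.2⟩))
  constructor
  · intro hzu
    by_contra hzv
    exact hnot (hC ⟨v, hvC, hv, q.R_of_not_R hz hv hzv⟩ ⟨u, huC, hu, hzu⟩)
  · intro hzv
    by_contra hzu
    exact hnot (hC ⟨u, huC, hu, q.R_of_not_R hz hu hzu⟩ ⟨v, hvC, hv, hzv⟩)

/-- Left of `z`, the `p`-indifference curve through `z` runs above the `q`-curve. -/
def CurveAboveLeft (p q : CMPref) (z : Bundle) : Prop :=
  ∃ a ∈ Z, a.1 < z.1 ∧ p.I a z ∧ ¬ q.R z a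

def posZ : Set Bundle := Ioi 0 ×ˢ Ioc 0 1

lemma posZ_subset_Z : posZ ⊆ Z := fun _ hz => ⟨hz.1.le, hz.2.1.le, hz.2.2⟩

lemma isPreconnected_posZ : IsPreconnected posZ :=
  ((convex_Ioi 0).prod (convex_Ioc 0 1)).isPreconnected

lemma CurveAboveLeft.mem_posZ {p q : CMPref} {z : Bundle} (h : CurveAboveLeft p q z)
    (hz : z ∈ Z) : z ∈ posZ := by
  obtain ⟨a, ha, ha₁, hI, -⟩ := h
  exact ⟨ha.1.trans_lt ha₁, ha.2.1.trans_lt (p.snd_lt_of_I ha hz hI ha₁), hz.2.2⟩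

lemma CMPref.exists_I_fst_lt (p : CMPref) {z : Bundle} (hz : z ∈ posZ) :
    ∃ a ∈ Z, a.1 < z.1 ∧ p.I a z := by
  have hzZ := posZ_subset_Z hz
  have h0 : ((z.1, 0) : Bundle) ∈ Z := ⟨hz.1.le, le_rfl, zero_le_one⟩
  have hO : ((z.1, 0) : Bundle) ∈ {x | x ∈ Z ∧ p.R x z}ᶜ := fun h =>
    (p.qMono z.1 0 z.2 h0 hzZ hz.2.1).2 h.2
  obtain ⟨t, ht, htO⟩ := exists_mem_Ioo_mk_mem_of_mem_nhds
    ((p.contUC z hzZ).isOpen_compl.mem_nhds hO) hz.1 ⟨hz.1.le, le_rfl⟩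
  have ht0 : ((t, 0) : Bundle) ∈ Z := ⟨ht.1.le, le_rfl, zero_le_one⟩
  have htz : ((t, z.2) : Bundle) ∈ Z := ⟨ht.1.le, hzZ.2⟩
  obtain ⟨s, hs, hI⟩ := p.exists_I_of_R_of_R hzZ hzZ.2.1 ht0 htz
    (p.R_of_not_R ht0 hzZ fun h => htO ⟨ht0, h⟩) (p.R_of_le_of_le htz hzZ ht.2.le le_rfl)
  exact ⟨(t, s), mk_mem_Z_of_mem_Icc ht0 hzZ ht.1.le hs, ht.2, hI⟩

lemma CurveAboveLeft.eventually {p q : CMPref} {z : Bundle} (h : CurveAboveLeft p q z)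
    (hz : z ∈ Z) :
    ∀ᶠ z' in 𝓝 z, z' ∈ Z → CurveAboveLeft p q z' := by
  obtain ⟨a, ha, ha₁, hIa, hqa⟩ := h
  obtain ⟨t, ht, hqv⟩ := exists_mem_Ioo_mk_mem_of_mem_nhds
    ((q.contLC z hz).isOpen_compl.mem_nhds fun h => hqa h.2) ha₁ ⟨le_rfl, ha₁.le⟩
  have ht0 : 0 ≤ t := ha.1.trans ht.1.le
  set v : Bundle := (t, a.2)
  set w : Bundle := (t, z.2)
  have hvZ : v ∈ Z := ⟨ht0, ha.2⟩
  have hwZ : w ∈ Z := ⟨ht0, hz.2⟩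
  have hav : a ≠ v := fun h => ht.1.ne (congrArg Prod.fst h)
  have hpv : ¬ p.R v z := fun h =>
    p.not_R_of_le_of_le ha hvZ ht.1.le le_rfl hav (p.trans _ _ _ h hIa.2)
  have hpw : ¬ p.R z w := p.not_R_of_le_of_le hwZ hz ht.2.le le_rfl
    fun h => ht.2.ne (congrArg Prod.fst h)
  -- for `z'` near `z`, the `p`-curve through `z'` crosses the vertical segment from `v` to `w`
  -- at a point `q`-preferred to `v`, hence strictly `q`-preferred to `z'`
  filter_upwards [(isOpen_lt continuous_const continuous_fst).mem_nhds ht.2,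
    (p.contLC v hvZ).isOpen_compl.mem_nhds fun h => hpv h.2,
    (p.contUC w hwZ).isOpen_compl.mem_nhds fun h => hpw h.2,
    (q.contUC v hvZ).isOpen_compl.mem_nhds fun h => hqv ⟨hvZ, h.2⟩] with z' ht' hpv' hpw' hqv' hz'
  obtain ⟨s, hs, hI⟩ := p.exists_I_of_R_of_R hz' (p.snd_lt_of_I ha hz hIa ha₁).le hvZ hwZ
    (p.R_of_not_R hvZ hz' fun h => hpv' ⟨hz', h⟩) (p.R_of_not_R hz' hwZ fun h => hpw' ⟨hz', h⟩)
  have hsZ := mk_mem_Z_of_mem_Icc hvZ hwZ ht0 hs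
  exact ⟨(t, s), hsZ, ht', hI, fun h =>
    hqv' ⟨hz', q.trans _ _ _ h (q.R_of_le_of_le hsZ hvZ le_rfl hs.1)⟩⟩

namespace SingleCrossing

variable {p q : CMPref} (hsc : SingleCrossing p q) {z : Bundle}
include hsc

lemma curveAboveLeft_of_not_cutsAt (hz : z ∈ Z) (h : ¬ CutsAt p q z) : CurveAboveLeft p q z := by
  obtain ⟨x, ⟨⟨hxZ, hxz⟩, -, hqx⟩, hpx⟩ := not_subset.mp h
  have hpx : ¬ p.R x z := fun h' => hpx ⟨⟨hxZ, hxz⟩, hxZ, h'⟩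
  obtain ⟨hx₁, hx₂⟩ : x.1 < z.1 ∧ x.2 < z.2 :=
    hxz.resolve_left fun h' => hpx (by rw [h']; exact p.R_refl hz)
  have htop : ((x.1, z.2) : Bundle) ∈ Z := ⟨hxZ.1, hz.2⟩
  obtain ⟨s, hs, hI⟩ := p.exists_I_of_R_of_R hz hx₂.le hxZ htop (p.R_of_not_R hxZ hz hpx)
    (p.R_of_le_of_le htop hz hx₁.le le_rfl)
  have haZ := mk_mem_Z_of_mem_Icc hxZ hz hxZ.1 hs
  have hqa : q.R (x.1, s) z := q.trans _ _ _ (q.R_of_le_of_le haZ hxZ le_rfl hs.1) hqx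
  refine ⟨(x.1, s), haZ, hx₁, hI, fun hqz => ?_⟩
  have := hsc.eq_of_I_of_I haZ hz hI ⟨hqa, hqz⟩
  exact hx₁.ne (Prod.ext_iff.1 this).1

lemma R_iff_not_R (hz : z ∈ Z) {a b : Bundle} (ha : a ∈ Z) (hb : b ∈ Z) (hIa : p.I a z)
    (hIb : q.I b z) (ha₁ : a.1 < z.1) (hb₁ : b.1 < z.1) : q.R z a ↔ ¬ p.R z b := by
  wlog hab : a.1 ≤ b.1 generalizing p q a b
  · have := this hsc.symm hb ha hIb hIa hb₁ ha₁ (le_of_not_ge hab)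
    tauto
  obtain ⟨s, hs, hIc⟩ := p.exists_I_fst_eq ha hz hIa ha₁ ⟨hab, hb₁.le⟩
  have hcZ := mk_mem_Z_of_mem_Icc ha hz hb.1 hs
  rw [hsc.R_iff_R_of_I hz ha hcZ hIa hIc ha₁ hb₁]
  rcases lt_trichotomy s b.2 with hsb | rfl | hsb
  · have hcb : ((b.1, s) : Bundle) ≠ b := fun h => hsb.ne (congrArg Prod.snd h)
    refine iff_of_true (q.trans _ _ _ hIb.2 (q.R_of_le_of_le hb hcZ le_rfl hsb.le)) fun h => ?_
    exact p.not_R_of_le_of_le hb hcZ le_rfl hsb.le hcb.symm (p.trans _ _ _ hIc.1 h)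
  · exact absurd (congrArg Prod.fst (hsc.eq_of_I_of_I hb hz hIc hIb)) hb₁.ne
  · have hcb : ((b.1, s) : Bundle) ≠ b := fun h => hsb.ne (congrArg Prod.snd h).symm
    refine iff_of_false (fun h => ?_) (not_not.2 (p.R_of_not_R hb hz fun h => ?_))
    · exact q.not_R_of_le_of_le hcZ hb le_rfl hsb.le hcb (q.trans _ _ _ hIb.1 h)
    · exact p.not_R_of_le_of_le hcZ hb le_rfl hsb.le hcb (p.trans _ _ _ h hIc.2)

lemma not_curveAboveLeft_and (hz : z ∈ Z) : ¬ (CurveAboveLeft p q z ∧ CurveAboveLeft q p z) :=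
  fun ⟨⟨_, ha, ha₁, hIa, hqa⟩, ⟨_, hb, hb₁, hIb, hpb⟩⟩ =>
    hpb (not_not.1 ((hsc.R_iff_not_R hz ha hb hIa hIb ha₁ hb₁).not.1 hqa))

lemma curveAboveLeft_or (hz : z ∈ posZ) : CurveAboveLeft p q z ∨ CurveAboveLeft q p z := by
  obtain ⟨a, ha, ha₁, hIa⟩ := p.exists_I_fst_lt hz
  obtain ⟨b, hb, hb₁, hIb⟩ := q.exists_I_fst_lt hz
  by_cases hqa : q.R z a
  · exact Or.inr ⟨b, hb, hb₁, hIb, (hsc.R_iff_not_R (posZ_subset_Z hz) ha hb hIa hIb ha₁ hb₁).1 hqa⟩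
  · exact Or.inl ⟨a, ha, ha₁, hIa, hqa⟩

lemma curveAboveLeft_of_mem_posZ {z₀ : Bundle} (hz₀ : z₀ ∈ Z) (h₀ : CurveAboveLeft p q z₀)
    (hz : z ∈ posZ) : CurveAboveLeft p q z := by
  set U := interior {z | z ∈ Z → CurveAboveLeft p q z}
  set V := interior {z | z ∈ Z → CurveAboveLeft q p z}
  have hU : ∀ z ∈ Z, CurveAboveLeft p q z → z ∈ U := fun z hz h =>
    mem_interior_iff_mem_nhds.2 (h.eventually hz)
  have hV : ∀ z ∈ Z, CurveAboveLeft q p z → z ∈ V := fun z hz h =>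
    mem_interior_iff_mem_nhds.2 (h.eventually hz)
  by_contra hnot
  have hcover : posZ ⊆ U ∪ V := fun z hz =>
    (hsc.curveAboveLeft_or hz).imp (hU z (posZ_subset_Z hz)) (hV z (posZ_subset_Z hz))
  obtain ⟨y, hy, hyU, hyV⟩ := isPreconnected_posZ U V isOpen_interior isOpen_interior hcover
    ⟨z₀, h₀.mem_posZ hz₀, hU z₀ hz₀ h₀⟩
    ⟨z, hz, hV z (posZ_subset_Z hz) ((hsc.curveAboveLeft_or hz).resolve_left hnot)⟩
  have hyZ := posZ_subset_Z hy
  exact hsc.not_curveAboveLeft_and hyZ ⟨interior_subset hyU hyZ, interior_subset hyV hyZ⟩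

lemma prec_or_prec (hne : p ≠ q) : Prec p q ∨ Prec q p := by
  have hcut : ∀ {p q : CMPref}, p ≠ q → ¬ Prec p q → ∃ z ∈ Z, ¬ CutsAt p q z := by
    intro p q hne h
    simpa [Prec, hne] using h
  by_contra! h
  obtain ⟨z₁, hz₁, h₁⟩ := hcut hne h.1
  obtain ⟨z₂, hz₂, h₂⟩ := hcut hne.symm h.2
  have hpq := hsc.curveAboveLeft_of_not_cutsAt hz₁ h₁
  have hqp := hsc.symm.curveAboveLeft_of_not_cutsAt hz₂ h₂
  exact hsc.not_curveAboveLeft_and hz₂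
    ⟨hsc.curveAboveLeft_of_mem_posZ hz₁ hpq (hqp.mem_posZ hz₂), hqp⟩

end SingleCrossing

lemma RichSC.precEq_or_prec {D : Set CMPref} (hD : RichSC D) {p q : CMPref} (hp : p ∈ D)
    (hq : q ∈ D) : PrecEq q p ∨ Prec p q := by
  by_cases hpq : p = q
  · exact Or.inl (Or.inr hpq.symm)
  · exact (hD.1 p hp q hq hpq).prec_or_prec hpq |>.symm.imp_left Or.inl

lemma PrecEq.trans {a b c : CMPref} (hab : PrecEq a b) (hbc : PrecEq b c) : PrecEq a c := by
  rcases hab with hab | rfl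
  · rcases hbc with hbc | rfl
    · by_cases hac : a = c
      · exact Or.inr hac
      · exact Or.inl ⟨hac, fun z hz _ hx => hab.2 z hz (hbc.2 z hz hx)⟩
    · exact Or.inl hab
  · exact hbc

lemma PrecEq.R_larger_of_I {r p : CMPref} (h : PrecEq r p) {x y : Bundle} (hx : x ∈ Z)
    (hy : y ∈ Z) (hI : r.I x y) (hxy : bleq x y) : p.R y x := by
  rcases hxy with rfl | ⟨hxy₁, hxy₂⟩
  · exact p.R_refl hx
  rcases h with h | rfl
  · by_contra hyx
    -- a slightly more expensive `x'` is still strictly `p`-preferred to `y`, hence weakly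
    -- `r`-preferred to `y` and so to `x`, which `x` dominates
    obtain ⟨t, ht, ht'⟩ := exists_mem_Ioo_mk_mem_of_mem_nhds
      ((p.contLC y hy).isOpen_compl.mem_nhds fun h => hyx h.2) hxy₁ ⟨le_rfl, hxy₁.le⟩
    have hx' : ((t, x.2) : Bundle) ∈ Z := ⟨hx.1.trans ht.1.le, hx.2⟩
    have hp : p.R (t, x.2) y := p.R_of_not_R hy hx' fun h => ht' ⟨hx', h⟩
    have hr : r.R (t, x.2) y := (h.2 y hy ⟨⟨hx', Or.inr ⟨ht.2, hxy₂⟩⟩, hx', hp⟩).2.2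
    exact r.not_R_of_le_of_le hx hx' ht.1.le le_rfl (fun h => ht.1.ne (congrArg Prod.fst h))
      (r.trans _ _ _ hr hI.2)
  · exact hI.2

lemma PrecEq.R_smaller_of_I {p r : CMPref} (h : PrecEq p r) {x y : Bundle} (hx : x ∈ Z)
    (hy : y ∈ Z) (hI : r.I x y) (hxy : bleq x y) : p.R x y := by
  rcases hxy with rfl | hxy
  · exact p.R_refl hx
  rcases h with h | rfl
  · exact (h.2 y hy ⟨⟨hx, Or.inr hxy⟩, hx, hI.1⟩).2.2
  · exact hI.1

lemma bleq_or_bleq_of_R_of_R {p q : CMPref} {x y : Bundle} (hx : x ∈ Z) (hy : y ∈ Z)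
    (hxy : p.R x y) (hyx : q.R y x) : bleq x y ∨ bleq y x := by
  have h₁ : x.1 ≤ y.1 → y.2 ≤ x.2 → x = y := fun h₁ h₂ => q.eq_of_R_of_le_of_le hx hy h₁ h₂ hyx
  have h₂ : y.1 ≤ x.1 → x.2 ≤ y.2 → y = x := fun h₁ h₂ => p.eq_of_R_of_le_of_le hy hx h₁ h₂ hxy
  rcases lt_trichotomy x.1 y.1 with hlt | heq | hlt
  · rcases le_or_gt y.2 x.2 with h | h
    exacts [Or.inl (Or.inl (h₁ hlt.le h)), Or.inl (Or.inr ⟨hlt, h⟩)]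
  · rcases le_total y.2 x.2 with h | h
    exacts [Or.inl (Or.inl (h₁ heq.le h)), Or.inr (Or.inl (h₂ heq.ge h))]
  · rcases le_or_gt x.2 y.2 with h | h
    exacts [Or.inr (Or.inl (h₂ hlt.le h)), Or.inr (Or.inr ⟨hlt, h⟩)]

lemma StrategyProofOn.bleq_of_prec {S : Set CMPref} {F : CMPref → Bundle}
    (hSP : StrategyProofOn S F) (hFZ : ∀ p ∈ S, F p ∈ Z) {p q : CMPref} (hp : p ∈ S) (hq : q ∈ S)
    (hpq : Prec p q) (hsc : SingleCrossing p q) : bleq (F p) (F q) := by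
  have hx := hFZ p hp
  have hy := hFZ q hq
  refine (bleq_or_bleq_of_R_of_R hx hy (hSP p hp q hq) (hSP q hq p hp)).elim id fun hyx => ?_
  have hIp : p.I (F q) (F p) :=
    ⟨(hpq.2 _ hx ⟨⟨hy, hyx⟩, hy, hSP q hq p hp⟩).2.2, hSP p hp q hq⟩
  have hIq : q.I (F q) (F p) := ⟨hSP q hq p hp, PrecEq.R_larger_of_I (Or.inl hpq) hy hx hIp hyx⟩
  exact Or.inl (hsc.eq_of_I_of_I hy hx hIp hIq).symm

section Thresholds

variable {n : ℕ} {r : ℕ → CMPref} {w : ℕ → Bundle}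

lemma precEq_of_le_of_precEq_succ (hr : ∀ i, 0 < i → i < n → PrecEq (r i) (r (i + 1))) {i j : ℕ}
    (hi : 0 < i) (hij : i ≤ j) (hj : j ≤ n) : PrecEq (r i) (r j) := by
  induction j, hij using Nat.le_induction with
  | base => exact Or.inr rfl
  | succ j hij ih => exact (ih (by omega)).trans (hr j (by omega) (by omega))

lemma R_of_between_thresholds (hwZ : ∀ i ≤ n, w i ∈ Z)
    (hwI : ∀ i < n, (r (i + 1)).I (w i) (w (i + 1))) (hw : ∀ i < n, bleq (w i) (w (i + 1)))
    {p : CMPref} {k : ℕ} (hk : k ≤ n) (hlo : ∀ i, 0 < i → i ≤ k → PrecEq (r i) p)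
    (hhi : ∀ i, k < i → i ≤ n → PrecEq p (r i)) {j : ℕ} (hj : j ≤ n) : p.R (w k) (w j) := by
  rcases le_total j k with hjk | hkj
  · induction hjk using Nat.decreasingInduction with
    | self => exact p.R_refl (hwZ k hk)
    | of_succ j hjk ih =>
      refine p.trans _ _ _ (ih (by omega)) ?_
      exact (hlo (j + 1) (by omega) hjk).R_larger_of_I (hwZ j hj) (hwZ (j + 1) (by omega))
        (hwI j (by omega)) (hw j (by omega))
  · induction j, hkj using Nat.le_induction with
    | base => exact p.R_refl (hwZ k hk)
    | succ j hkj ih =>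
      refine p.trans _ _ _ (ih (by omega)) ?_
      exact (hhi (j + 1) (by omega) hj).R_smaller_of_I (hwZ j (by omega)) (hwZ (j + 1) hj)
        (hwI j (by omega)) (hw j (by omega))

lemma exists_between_thresholds {p : CMPref} (hr : ∀ i, 0 < i → i < n → PrecEq (r i) (r (i + 1)))
    (hp : ∀ i, 0 < i → i ≤ n → PrecEq (r i) p ∨ Prec p (r i)) :
    ∃ k ≤ n, (∀ i, 0 < i → i ≤ k → PrecEq (r i) p) ∧ ∀ i, k < i → i ≤ n → Prec p (r i) := by
  classical
  set k := Nat.findGreatest (fun i => 0 < i ∧ PrecEq (r i) p) n with hk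
  refine ⟨k, Nat.findGreatest_le n, fun i hi hik => ?_, fun i hki hin => ?_⟩
  · obtain ⟨-, hkp⟩ := Nat.findGreatest_of_ne_zero hk.symm (by omega)
    exact (precEq_of_le_of_precEq_succ hr hi hik (Nat.findGreatest_le n)).trans hkp
  · have := Nat.findGreatest_is_greatest hki hin
    exact (hp i (by omega) hin).resolve_left fun h => this ⟨by omega, h⟩

theorem strategyProofOn_of_thresholds {S : Set CMPref} {G : CMPref → Bundle}
    (hr : ∀ i, 0 < i → i < n → PrecEq (r i) (r (i + 1)))
    (hcomp : ∀ p ∈ S, ∀ i, 0 < i → i ≤ n → PrecEq (r i) p ∨ Prec p (r i))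
    (hwZ : ∀ i ≤ n, w i ∈ Z) (hwI : ∀ i < n, (r (i + 1)).I (w i) (w (i + 1)))
    (hw : ∀ i < n, bleq (w i) (w (i + 1)))
    (hG : ∀ p ∈ S, ∀ k ≤ n, (0 < k → PrecEq (r k) p) → (k < n → Prec p (r (k + 1))) → G p = w k) :
    StrategyProofOn S G ∧ ∀ p ∈ S, p.R (G p) (w 0) := by
  have key : ∀ p ∈ S, ∃ k ≤ n, G p = w k ∧ ∀ j ≤ n, p.R (w k) (w j) := by
    intro p hp
    obtain ⟨k, hk, hlo, hhi⟩ := exists_between_thresholds hr (hcomp p hp)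
    refine ⟨k, hk, hG p hp k hk (hlo k · le_rfl) (hhi (k + 1) (by omega)), fun j hj => ?_⟩
    exact R_of_between_thresholds hwZ hwI hw hk hlo (fun i hki hin => Or.inl (hhi i hki hin)) hj
  refine ⟨fun p hp q hq => ?_, fun p hp => ?_⟩
  · obtain ⟨k, -, hGp, hpk⟩ := key p hp
    obtain ⟨j, hj, hGq, -⟩ := key q hq
    rw [hGp, hGq]
    exact hpk j hj
  · obtain ⟨k, -, hGp, hpk⟩ := key p hp
    rw [hGp]
    exact hpk 0 (Nat.zero_le n)

end Thresholds

def ladder (lo : CMPref) (R : ℕ → CMPref) (m : ℕ) (hi : CMPref) (k : ℕ) : CMPref :=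
  if k = 0 then lo else if k ≤ m then R k else hi

section Ladder

variable {lo hi : CMPref} {R : ℕ → CMPref} {m : ℕ}

lemma forall_ladder (P : ℕ → CMPref → Prop) (hlo : P 0 lo) (hR : ∀ k, 1 ≤ k → k ≤ m → P k (R k))
    (hhi : P (m + 1) hi) : ∀ k ≤ m + 1, P k (ladder lo R m hi k) := by
  intro k hk
  rcases (by omega : k = 0 ∨ (1 ≤ k ∧ k ≤ m) ∨ k = m + 1) with rfl | ⟨hk1, hkm⟩ | rfl
  · simpa [ladder] using hlo
  · simpa [ladder, Nat.one_le_iff_ne_zero.1 hk1, hkm] using hR k hk1 hkm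
  · simpa [ladder] using hhi

lemma forall_ladder_succ (P : ℕ → CMPref → CMPref → Prop) (hm : 1 ≤ m) (hlo : P 0 lo (R 1))
    (hR : ∀ k, 1 ≤ k → k < m → P k (R k) (R (k + 1))) (hhi : P m (R m) hi) :
    ∀ k < m + 1, P k (ladder lo R m hi k) (ladder lo R m hi (k + 1)) := by
  intro k hk
  rcases (by omega : k = 0 ∨ (1 ≤ k ∧ k < m) ∨ k = m) with rfl | ⟨hk1, hkm⟩ | rfl
  · simpa [ladder, hm] using hlo
  · simpa [ladder, Nat.one_le_iff_ne_zero.1 hk1, hkm.le, Nat.succ_le_of_lt hkm] using hR k hk1 hkm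
  · simpa [ladder, Nat.one_le_iff_ne_zero.1 hm] using hhi

end Ladder

theorem stmt11_general (D : Set CMPref) (hD : RichSC D) (Rlo Rhi : CMPref)
    (hloD : Rlo ∈ D) (hhiD : Rhi ∈ D)
    (F : CMPref → Bundle) (hFZ : ∀ p ∈ OrdInterval D Rlo Rhi, F p ∈ Z)
    (hSP : StrategyProofOn (OrdInterval D Rlo Rhi) F)
    (hF0 : F Rlo = ((0:ℝ), (0:ℝ)))
    (m : ℕ) (hm : 1 ≤ m) (Rk Rstar : ℕ → CMPref)
    (hmemk : ∀ k, 1 ≤ k → k ≤ m → Rk k ∈ OrdInterval D Rlo Rhi)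
    (hmems : ∀ k, 1 ≤ k → k ≤ m + 1 → Rstar k ∈ OrdInterval D Rlo Rhi)
    (hchain : ∀ k, 1 ≤ k → k < m → Prec (Rk k) (Rk (k+1)))
    (hlo1 : Prec Rlo (Rk 1)) (hhi1 : Prec (Rk m) Rhi)
    (hint2 : ∀ k, 1 ≤ k → k ≤ m → PrecEq (Rstar k) (Rk k) ∧ PrecEq (Rk k) (Rstar (k+1)))
    (hind1 : (Rstar 1).I ((0:ℝ), (0:ℝ)) (F (Rk 1)))
    (hind : ∀ k, 2 ≤ k → k ≤ m → (Rstar k).I (F (Rk (k-1))) (F (Rk k)))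
    (hindl : (Rstar (m+1)).I (F (Rk m)) (F Rhi))
    (G : CMPref → Bundle)
    (hG1 : ∀ p ∈ OrdInterval D Rlo Rhi, Prec p (Rstar 1) → G p = ((0:ℝ), (0:ℝ)))
    (hG2 : ∀ p ∈ OrdInterval D Rlo Rhi, ∀ k, 1 ≤ k → k ≤ m →
      PrecEq (Rstar k) p → Prec p (Rstar (k+1)) → G p = F (Rk k))
    (hG3 : ∀ p ∈ OrdInterval D Rlo Rhi, PrecEq (Rstar (m+1)) p → G p = F Rhi) :
    StrategyProofOn (OrdInterval D Rlo Rhi) G ∧ IROn (OrdInterval D Rlo Rhi) G := by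
  set S := OrdInterval D Rlo Rhi
  set T := ladder Rlo Rk m Rhi
  have hlohi : PrecEq Rlo Rhi := (hmemk 1 le_rfl hm).2.1.trans (hmemk 1 le_rfl hm).2.2
  have hTS : ∀ k ≤ m + 1, T k ∈ S :=
    forall_ladder (fun _ p => p ∈ S) ⟨hloD, Or.inr rfl, hlohi⟩ hmemk ⟨hhiD, hlohi, Or.inr rfl⟩
  have hTprec : ∀ k < m + 1, Prec (T k) (T (k + 1)) :=
    forall_ladder_succ (fun _ p q => Prec p q) hm hlo1 hchain hhi1
  have hTI : ∀ k < m + 1, (Rstar (k + 1)).I (F (T k)) (F (T (k + 1))) :=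
    forall_ladder_succ (fun k p q => (Rstar (k + 1)).I (F p) (F q)) hm (hF0 ▸ hind1)
      (fun k hk hkm => by simpa using hind (k + 1) (by omega) hkm) hindl
  have hGT : ∀ p ∈ S, ∀ k ≤ m + 1, (0 < k → PrecEq (Rstar k) p) →
      (k < m + 1 → Prec p (Rstar (k + 1))) → G p = F (T k) := fun p hp =>
    forall_ladder (fun k q => (0 < k → PrecEq (Rstar k) p) → (k < m + 1 → Prec p (Rstar (k + 1))) →
        G p = F q)
      (fun _ hhi => hF0 ▸ hG1 p hp (hhi (by omega)))
      (fun k hk hkm hlo hhi => hG2 p hp k hk hkm (hlo hk) (hhi (by omega)))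
      (fun hlo _ => hG3 p hp (hlo (by omega)))
  obtain ⟨hGSP, hGIR⟩ := strategyProofOn_of_thresholds (n := m + 1) (r := Rstar) (w := F ∘ T)
    (fun i hi hin => (hint2 i hi (by omega)).1.trans (hint2 i hi (by omega)).2)
    (fun p hp i hi hin => hD.precEq_or_prec hp.1 (hmems i hi hin).1)
    (fun i hi => hFZ _ (hTS i hi)) hTI
    (fun i hi => hSP.bleq_of_prec hFZ (hTS i hi.le) (hTS (i + 1) hi) (hTprec i hi)
      (hD.1 _ (hTS i hi.le).1 _ (hTS (i + 1) hi).1 (hTprec i hi).1)) hGT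
  refine ⟨hGSP, fun p hp => ?_⟩
  simpa [T, ladder, hF0] using hGIR p hp

theorem stmt11 (D : Set CMPref) (hD : RichSC D) (Rlo Rhi : CMPref)
    (hloD : Rlo ∈ D) (hhiD : Rhi ∈ D)
    (F : CMPref → Bundle) (hFZ : ∀ p ∈ OrdInterval D Rlo Rhi, F p ∈ Z)
    (hSP : StrategyProofOn (OrdInterval D Rlo Rhi) F)
    (hIR : IROn (OrdInterval D Rlo Rhi) F)
    (hF0 : F Rlo = ((0:ℝ), (0:ℝ)))
    (m : ℕ) (hm : 1 ≤ m) (Rk Rstar : ℕ → CMPref)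
    (hmemk : ∀ k, 1 ≤ k → k ≤ m → Rk k ∈ OrdInterval D Rlo Rhi)
    (hmems : ∀ k, 1 ≤ k → k ≤ m + 1 → Rstar k ∈ OrdInterval D Rlo Rhi)
    (hchain : ∀ k, 1 ≤ k → k < m → Prec (Rk k) (Rk (k+1)))
    (hlo1 : Prec Rlo (Rk 1)) (hhi1 : Prec (Rk m) Rhi)
    (hint1 : PrecEq Rlo (Rstar 1))
    (hint2 : ∀ k, 1 ≤ k → k ≤ m → PrecEq (Rstar k) (Rk k) ∧ PrecEq (Rk k) (Rstar (k+1)))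
    (hint3 : PrecEq (Rstar (m+1)) Rhi)
    (hind1 : (Rstar 1).I ((0:ℝ), (0:ℝ)) (F (Rk 1)))
    (hind : ∀ k, 2 ≤ k → k ≤ m → (Rstar k).I (F (Rk (k-1))) (F (Rk k)))
    (hindl : (Rstar (m+1)).I (F (Rk m)) (F Rhi))
    (G : CMPref → Bundle)
    (hG1 : ∀ p ∈ OrdInterval D Rlo Rhi, Prec p (Rstar 1) → G p = ((0:ℝ), (0:ℝ)))
    (hG2 : ∀ p ∈ OrdInterval D Rlo Rhi, ∀ k, 1 ≤ k → k ≤ m →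
      PrecEq (Rstar k) p → Prec p (Rstar (k+1)) → G p = F (Rk k))
    (hG3 : ∀ p ∈ OrdInterval D Rlo Rhi, PrecEq (Rstar (m+1)) p → G p = F Rhi) :
    StrategyProofOn (OrdInterval D Rlo Rhi) G ∧ IROn (OrdInterval D Rlo Rhi) G :=
  stmt11_general D hD Rlo Rhi hloD hhiD F hFZ hSP hF0 m hm Rk Rstar hmemk hmems hchain hlo1 hhi1
    hint2 hind1 hind hindl G hG1 hG2 hG3
end
end

section
/- Let ([R̲,R̄], ℬ, μ) be a probability space over a closed interval of a rich single-crossing domain with its order-topology Borel σ-algebra. Let F = (t_F, q_F) be strategy-proof and individually rational with F(R̲) = (0,0). Then for every ε > 0 there exists a strategy-proof, individually rational mechanism G with finite range such that E[F] − E[G] < ε, where E[H] = ∫ t_H dμ denotes expected revenue. -/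
open Set MeasureTheory Filter Topology
open scoped ENNReal

noncomputable section

/-!
If a lower type weakly prefers `z` to `w` and a higher type weakly prefers `w` to `z`, then `w`
costs at least as much as `z`: the higher type cuts the lower one from above, and continuity (or
single crossing, when the higher type is indifferent) excludes a cheaper `w`. For a strategy-proof
mechanism this makes `t_F` monotone, so each upper level set `{t_F ≥ k h}` lies, up to a set of
small measure, above a single type `p_k`. Offer the finite menu of the bundles `F ⊥ = (0, 0)` and
`F p_k`, every type picking a best item and breaking ties towards the higher payment. The same
comparison shows that a type above `p_k` pays at least `t_F p_k ≥ k h`, so off a small set the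
revenue lost is less than `h`.
-/

namespace CMPref

variable (p : CMPref)

lemma R_refl_s13 {z : Bundle} (hz : z ∈ Z) : p.R z z :=
  (p.total z hz z hz).elim id id

lemma snd_lt_of_R_of_fst_lt {z w : Bundle} (hz : z ∈ Z) (hw : w ∈ Z) (h : p.R z w)
    (h₁ : w.1 < z.1) : w.2 < z.2 := by
  by_contra! h₂
  have hm : ((w.1, z.2) : Bundle) ∈ Z := ⟨hw.1, hz.2⟩
  have hwm : p.R w (w.1, z.2) := by
    rcases h₂.eq_or_lt with h₂ | h₂
    · rw [h₂]
      exact p.R_refl_s13 hw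
    · exact (p.qMono w.1 z.2 w.2 hm hw h₂).1
  exact (p.moneyMono w.1 z.1 z.2 hm hz h₁).2 (p.trans _ _ _ h hwm)

lemma exists_indifferent_price {z : Bundle} (hz : z ∈ Z) {a b q : ℝ} (hab : a ≤ b)
    (ha : 0 ≤ a) (hq : q ∈ Icc (0 : ℝ) 1) (hlo : p.R (a, q) z) (hhi : p.R z (b, q)) :
    ∃ s ∈ Icc a b, p.I (s, q) z := by
  let φ : ℝ → Bundle := fun s => (s, q)
  have hφ : Continuous φ := continuous_id.prodMk continuous_const
  have hφZ : ∀ s ∈ Icc a b, φ s ∈ Z := fun s hs => ⟨ha.trans hs.1, hq⟩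
  have hcover : Icc a b ⊆ φ ⁻¹' UC p z ∪ φ ⁻¹' {x | x ∈ Z ∧ p.R z x} := fun s hs =>
    (p.total _ (hφZ s hs) z hz).imp (fun h => ⟨hφZ s hs, h⟩) (fun h => ⟨hφZ s hs, h⟩)
  obtain ⟨s, hs, hsU, hsL⟩ := isPreconnected_closed_iff.mp isPreconnected_Icc _ _
    ((p.contUC z hz).preimage hφ) ((p.contLC z hz).preimage hφ) hcover
    ⟨a, left_mem_Icc.mpr hab, hφZ a (left_mem_Icc.mpr hab), hlo⟩
    ⟨b, right_mem_Icc.mpr hab, hφZ b (right_mem_Icc.mpr hab), hhi⟩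
  exact ⟨s, hs, hsU.2, hsL.2⟩

lemma exists_best_of_finite {S : Set Bundle} (hS : S.Finite) (hne : S.Nonempty) (hSZ : S ⊆ Z) :
    ∃ m ∈ S, ∀ w ∈ S, p.R m w := by
  induction S, hS using Set.Finite.induction_on with
  | empty => exact absurd hne Set.not_nonempty_empty
  | @insert a s _ _ ih =>
    have haZ : a ∈ Z := hSZ (mem_insert a s)
    rcases s.eq_empty_or_nonempty with rfl | hs
    · exact ⟨a, mem_insert a ∅,
        forall_mem_insert.mpr ⟨p.R_refl_s13 haZ, fun w hw => absurd hw (notMem_empty w)⟩⟩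
    obtain ⟨m, hm, hmax⟩ := ih hs ((subset_insert a s).trans hSZ)
    rcases p.total a haZ m (hSZ (mem_insert_of_mem a hm)) with ham | hma
    · refine ⟨a, mem_insert a s, forall_mem_insert.mpr ⟨p.R_refl_s13 haZ, ?_⟩⟩
      exact fun w hw => p.trans _ _ _ ham (hmax w hw)
    · exact ⟨m, mem_insert_of_mem a hm, forall_mem_insert.mpr ⟨hma, hmax⟩⟩

lemma exists_best_of_finite_max_fst {S : Set Bundle} (hS : S.Finite) (hne : S.Nonempty)
    (hSZ : S ⊆ Z) :
    ∃ m ∈ S, (∀ w ∈ S, p.R m w) ∧ ∀ w ∈ S, p.R w m → w.1 ≤ m.1 := by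
  obtain ⟨m, ⟨hmS, hmbest⟩, hmax⟩ := Set.exists_max_image {m | m ∈ S ∧ ∀ w ∈ S, p.R m w}
    Prod.fst (hS.subset fun _ h => h.1) (p.exists_best_of_finite hS hne hSZ)
  exact ⟨m, hmS, hmbest, fun w hw hwm =>
    hmax w ⟨hw, fun v hv => p.trans _ _ _ hwm (hmbest v hv)⟩⟩

end CMPref

section Prec

variable {p q : CMPref} {z w : Bundle}

/-- `q` is indifferent between `z` and some `(s, w.2)` with `w.1 < s < z.1`; as `q` cuts `p` from
above at `z`, `p` weakly prefers `(s, w.2)` to `z`, hence to `w`, although it costs more. -/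
lemma fst_le_fst_of_prec_of_not_R (hpq : Prec p q) (hz : z ∈ Z) (hw : w ∈ Z) (hp : p.R z w)
    (hq : q.R w z) (hqn : ¬ q.R z w) : z.1 ≤ w.1 := by
  by_contra! hlt
  have hsnd := p.snd_lt_of_R_of_fst_lt hz hw hp hlt
  have hv : ((z.1, w.2) : Bundle) ∈ Z := ⟨hz.1, hw.2⟩
  have hzv := q.qMono z.1 w.2 z.2 hv hz hsnd
  obtain ⟨s, hs, hsI⟩ := q.exists_indifferent_price hz hlt.le hw.1 hw.2 hq hzv.1
  have hsz : s < z.1 := hs.2.lt_of_ne (by rintro rfl; exact hzv.2 hsI.1)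
  have hws : w.1 < s := hs.1.lt_of_ne (by rintro rfl; exact hqn hsI.2)
  have hsZ : ((s, w.2) : Bundle) ∈ Z := ⟨hw.1.trans hs.1, hw.2⟩
  have hcut := hpq.2 z hz ⟨⟨hsZ, Or.inr ⟨hsz, hsnd⟩⟩, hsZ, hsI.1⟩
  exact (p.moneyMono w.1 s w.2 hw hsZ hws).2 (p.trans _ _ _ hcut.2.2 hp)

lemma fst_le_fst_of_prec (hpq : Prec p q) (hsc : SingleCrossing p q) (hz : z ∈ Z) (hw : w ∈ Z)
    (hp : p.R z w) (hq : q.R w z) : z.1 ≤ w.1 := by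
  by_cases hqn : q.R z w
  · by_contra! hlt
    have hsnd := p.snd_lt_of_R_of_fst_lt hz hw hp hlt
    have hpw : p.R w z := (hpq.2 z hz ⟨⟨hw, Or.inr ⟨hlt, hsnd⟩⟩, hw, hq⟩).2.2
    have hzIC : z ∈ IC p z ∩ IC q z :=
      ⟨⟨hz, p.R_refl_s13 hz, p.R_refl_s13 hz⟩, hz, q.R_refl_s13 hz, q.R_refl_s13 hz⟩
    have hwIC : w ∈ IC p z ∩ IC q z := ⟨⟨hw, hpw, hp⟩, hw, hq, hqn⟩
    rw [hsc z z z hzIC] at hwIC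
    exact hlt.ne (congrArg Prod.fst hwIC)
  · exact fst_le_fst_of_prec_of_not_R hpq hz hw hp hq hqn

end Prec

section Mechanism

variable {X : Type*} [LinearOrder X] {e : X → CMPref}

lemma monotone_fst_of_strategyProof {D : Set CMPref} (hD : RichSC D) (he : ∀ x, e x ∈ D)
    (hord : ∀ x y : X, x < y ↔ Prec (e x) (e y)) {H : X → Bundle} (hHZ : ∀ x, H x ∈ Z)
    (hSP : ∀ x y : X, (e x).R (H x) (H y)) : Monotone fun x => (H x).1 := by
  intro x y hxy
  rcases hxy.lt_or_eq with hlt | rfl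
  · have hpq := (hord x y).mp hlt
    exact fst_le_fst_of_prec hpq (hD.1 _ (he x) _ (he y) hpq.1) (hHZ x) (hHZ y) (hSP x y) (hSP y x)
  · exact le_rfl

lemma fst_le_of_mem_range_of_R (hord : ∀ x y : X, x < y ↔ Prec (e x) (e y)) {F : X → Bundle}
    (hFZ : ∀ x, F x ∈ Z) (hSP : ∀ x y : X, (e x).R (F x) (F y)) {a x : X} (hax : a ≤ x)
    {g : Bundle} (hg : g ∈ range F) (hbest : (e x).R g (F a))
    (htie : (e x).R (F a) g → (F a).1 ≤ g.1) : (F a).1 ≤ g.1 := by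
  by_cases hxg : (e x).R (F a) g
  · exact htie hxg
  obtain ⟨b, rfl⟩ := hg
  have hlt : a < x := hax.lt_of_ne (by rintro rfl; exact hxg (hSP a b))
  exact fst_le_fst_of_prec_of_not_R ((hord a x).mp hlt) (hFZ a) (hFZ b) (hSP a b) hbest hxg

end Mechanism

lemma lt_add_of_forall_nat_mul_le {a b h : ℝ} (hh : 0 < h) (ha : 0 ≤ a) (hb : 0 ≤ b)
    (H : ∀ k : ℕ, 0 < k → k * h ≤ a → k * h ≤ b) : a < b + h := by
  set k := ⌊a / h⌋₊
  have hk₁ : k * h ≤ a := (le_div_iff₀ hh).mp (Nat.floor_le (div_nonneg ha hh.le))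
  have hk₂ : a < k * h + h := by
    have := (div_lt_iff₀ hh).mp (Nat.lt_floor_add_one (a / h))
    linarith [add_one_mul (k : ℝ) h]
  rcases k.eq_zero_or_pos with hk | hk
  · rw [hk, Nat.cast_zero, zero_mul] at hk₂
    linarith
  · linarith [H k hk hk₁]

lemma Monotone.integrable {X : Type*} [LinearOrder X] [BoundedOrder X] [TopologicalSpace X]
    [OrderClosedTopology X] [MeasurableSpace X] [BorelSpace X] {μ : Measure X}
    [IsFiniteMeasure μ] {f : X → ℝ} (hf : Monotone f) : Integrable f μ :=
  .of_bound hf.measurable.aestronglyMeasurable (max |f ⊥| |f ⊤|)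
    (.of_forall fun _ => abs_le_max_abs_abs (hf bot_le) (hf le_top))

lemma integral_sub_le_add_measureReal_mul {X : Type*} [MeasurableSpace X] {μ : Measure X}
    [IsProbabilityMeasure μ] {f g : X → ℝ} (hf : Integrable f μ) (hg : Integrable g μ)
    {E : Set X} (hE : MeasurableSet E) {h T : ℝ}
    (hle : ∀ x, f x - g x ≤ h + E.indicator (fun _ => T) x) :
    ∫ x, f x ∂μ - ∫ x, g x ∂μ ≤ h + μ.real E * T := by
  have hint : Integrable (fun x => h + E.indicator (fun _ => T) x) μ :=
    (integrable_const h).add ((integrable_const T).indicator hE)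
  calc ∫ x, f x ∂μ - ∫ x, g x ∂μ = ∫ x, (f x - g x) ∂μ := (integral_sub hf hg).symm
    _ ≤ ∫ x, (h + E.indicator (fun _ => T) x) ∂μ := integral_mono (hf.sub hg) hint hle
    _ = h + μ.real E * T := by
      rw [integral_add (integrable_const h) ((integrable_const T).indicator hE),
        integral_indicator_const T hE]
      simp

lemma exists_measure_Ioo_lt {X : Type*} [LinearOrder X] [TopologicalSpace X] [OrderTopology X]
    [DenselyOrdered X] [FirstCountableTopology X] [MeasurableSpace X] [OpensMeasurableSpace X]
    (μ : Measure X) [IsFiniteMeasure μ] {a b : X} (hab : a < b) {η : ℝ≥0∞} (hη : 0 < η) :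
    ∃ y, a < y ∧ μ (Ioo a y) < η := by
  have hlim : Tendsto (fun y => μ (Ioo a y)) (𝓝[>] a) (𝓝 0) := by
    have h := tendsto_measure_biInter_gt (μ := μ) (s := fun y => Ioo a y) (a := a)
      (fun _ _ => measurableSet_Ioo.nullMeasurableSet)
      (fun _ _ _ hij => Ioo_subset_Ioo_right hij) ⟨b, hab, measure_ne_top μ _⟩
    have hempty : ⋂ y > a, Ioo a y = ∅ :=
      eq_empty_of_forall_notMem fun x hx => (mem_iInter₂.mp hx x (mem_iInter₂.mp hx b hab).1).2.false
    rwa [hempty, measure_empty] at h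
  have := nhdsGT_neBot_of_exists_gt ⟨b, hab⟩
  exact (eventually_mem_nhdsWithin.and (hlim.eventually_lt_const hη)).exists

section CompleteLinearOrder

variable {X : Type*} [CompleteLinearOrder X] [TopologicalSpace X] [OrderTopology X]
  [DenselyOrdered X] [FirstCountableTopology X] [MeasurableSpace X] (μ : Measure X)

lemma IsUpperSet.exists_le_of_notMem [OpensMeasurableSpace X] [IsFiniteMeasure μ] {U : Set X}
    (hU : IsUpperSet U) {η : ℝ≥0∞} (hη : 0 < η) :
    ∃ p B, MeasurableSet B ∧ μ B < η ∧ ∀ x ∈ U, x ∉ B → p ∈ U ∧ p ≤ x := by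
  by_cases hinf : sInf U ∈ U
  · exact ⟨sInf U, ∅, .empty, by simpa using hη, fun x hx _ => ⟨hinf, sInf_le hx⟩⟩
  have hgt : ∀ x ∈ U, sInf U < x := fun x hx =>
    (sInf_le hx).lt_of_ne fun h => hinf (h ▸ hx)
  rcases U.eq_empty_or_nonempty with rfl | ⟨x₀, hx₀⟩
  · exact ⟨⊥, ∅, .empty, by simpa using hη, fun x hx => absurd hx (notMem_empty x)⟩
  obtain ⟨y, hy, hμy⟩ := exists_measure_Ioo_lt μ (hgt x₀ hx₀) hη
  obtain ⟨u, hu, huy⟩ := sInf_lt_iff.mp hy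
  exact ⟨y, Ioo (sInf U) y, measurableSet_Ioo, hμy,
    fun x hx hxB => ⟨hU huy.le hu, not_lt.mp fun hxy => hxB ⟨hgt x hx, hxy⟩⟩⟩

theorem Monotone.exists_finset_integral_sub_lt [BorelSpace X] [IsProbabilityMeasure μ]
    {t : X → ℝ} (ht : Monotone t) (ht0 : ∀ x, 0 ≤ t x) {ε : ℝ} (hε : 0 < ε) :
    ∃ P : Finset X, ∀ g : X → ℝ, Integrable g μ → (∀ x, 0 ≤ g x) →
      (∀ p ∈ P, ∀ x, p ≤ x → t p ≤ g x) → ∫ x, t x ∂μ - ∫ x, g x ∂μ < ε := by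
  set h := ε / 2 with hh_def
  set T := t ⊤
  set N := ⌈T / h⌉₊
  set η := h / (T * N + 1) with hη_def
  have hh : 0 < h := by positivity
  have hT : 0 ≤ T := ht0 ⊤
  have hη : 0 < η := by positivity
  choose p B hBm hBμ hpB using fun k : ℕ =>
    (show IsUpperSet {x | k * h ≤ t x} from fun _ _ hab ha => ha.trans (ht hab)).exists_le_of_notMem
      μ (ENNReal.ofReal_pos.mpr hη)
  refine ⟨(Finset.Icc 1 N).image p, fun g hg hg0 hgP => ?_⟩
  set E := ⋃ k ∈ Finset.Icc 1 N, B k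
  have hEm : MeasurableSet E := Finset.measurableSet_biUnion _ fun k _ => hBm k
  have hE : μ.real E ≤ N * η := by
    refine (measureReal_biUnion_finset_le _ _).trans ?_
    refine (Finset.sum_le_sum fun k _ => ENNReal.toReal_le_of_le_ofReal hη.le (hBμ k).le).trans ?_
    simp
  have hgood : ∀ x ∉ E, t x < g x + h := fun x hx =>
    lt_add_of_forall_nat_mul_le hh (ht0 x) (hg0 x) fun k hk hkx => by
      have hkN : k ≤ N := by
        exact_mod_cast ((le_div_iff₀ hh).mpr (hkx.trans (ht le_top))).trans (Nat.le_ceil _)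
      have hkI : k ∈ Finset.Icc 1 N := Finset.mem_Icc.mpr ⟨hk, hkN⟩
      obtain ⟨hpk, hpx⟩ := hpB k x hkx fun hxB => hx (mem_biUnion hkI hxB)
      exact hpk.trans (hgP (p k) (Finset.mem_image_of_mem p hkI) x hpx)
  have hbound : ∀ x, t x - g x ≤ h + E.indicator (fun _ => T) x := by
    intro x
    by_cases hx : x ∈ E
    · rw [indicator_of_mem hx]
      linarith [ht (le_top : x ≤ ⊤), hg0 x]
    · rw [indicator_of_notMem hx]
      linarith [hgood x hx]
  have hTN : T * N * η < h := by
    rw [hη_def, mul_div_assoc', div_lt_iff₀ (by positivity)]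
    linarith [mul_nonneg hT (Nat.cast_nonneg N : (0 : ℝ) ≤ N)]
  have := integral_sub_le_add_measureReal_mul ht.integrable hg hEm hbound
  linarith [mul_le_mul_of_nonneg_left hE hT, hh_def]

end CompleteLinearOrder

theorem stmt13_general {X : Type*} [CompleteLinearOrder X] [DenselyOrdered X]
    [TopologicalSpace X] [OrderTopology X] [TopologicalSpace.MetrizableSpace X]
    [MeasurableSpace X] [BorelSpace X] (μ : Measure X) [IsProbabilityMeasure μ]
    (D : Set CMPref) (hD : RichSC D) (e : X → CMPref) (he : ∀ x, e x ∈ D)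
    (hord : ∀ x y : X, x < y ↔ Prec (e x) (e y))
    (F : X → Bundle) (hFZ : ∀ x, F x ∈ Z)
    (hSP : ∀ x y : X, (e x).R (F x) (F y))
    (hF0 : F ⊥ = ((0:ℝ), (0:ℝ))) :
    ∀ ε : ℝ, 0 < ε → ∃ G : X → Bundle,
      (Set.range G).Finite ∧ (∀ x, G x ∈ Z) ∧
      (∀ x y : X, (e x).R (G x) (G y)) ∧
      (∀ x, (e x).R (G x) ((0:ℝ), (0:ℝ))) ∧
      (∫ x, (F x).1 ∂μ) - (∫ x, (G x).1 ∂μ) < ε := by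
  intro ε hε
  obtain ⟨P, hP⟩ := (monotone_fst_of_strategyProof hD he hord hFZ hSP).exists_finset_integral_sub_lt
    μ (fun x => (hFZ x).1) hε
  set M := F '' insert ⊥ (P : Set X)
  have hMfin : M.Finite := ((P.finite_toSet).insert ⊥).image F
  have h0M : ((0:ℝ), (0:ℝ)) ∈ M := ⟨⊥, mem_insert ⊥ _, hF0⟩
  have hMZ : M ⊆ Z := image_subset_iff.mpr fun x _ => hFZ x
  choose G hGM hGbest hGtie using fun x => (e x).exists_best_of_finite_max_fst hMfin ⟨_, h0M⟩ hMZ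
  have hGZ : ∀ x, G x ∈ Z := fun x => hMZ (hGM x)
  have hGSP : ∀ x y : X, (e x).R (G x) (G y) := fun x y => hGbest x _ (hGM y)
  refine ⟨G, hMfin.subset (range_subset_iff.mpr hGM), hGZ, hGSP, fun x => hGbest x _ h0M,
    hP _ (monotone_fst_of_strategyProof hD he hord hGZ hGSP).integrable (fun x => (hGZ x).1) ?_⟩
  intro a ha x hax
  have hFa : F a ∈ M := mem_image_of_mem F (mem_insert_of_mem ⊥ ha)
  exact fst_le_of_mem_range_of_R hord hFZ hSP hax (image_subset_range _ _ (hGM x))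
    (hGbest x _ hFa) (hGtie x _ hFa)

theorem stmt13 {X : Type*} [CompleteLinearOrder X] [DenselyOrdered X]
    [TopologicalSpace X] [OrderTopology X] [TopologicalSpace.MetrizableSpace X]
    [MeasurableSpace X] [BorelSpace X] (μ : Measure X) [IsProbabilityMeasure μ]
    (hnt : ∀ A : Set X, A.OrdConnected → (∃ x ∈ A, ∃ y ∈ A, x ≠ y) → 0 < μ A)
    (hcont : ∀ A : Set X, MeasurableSet A → ∀ c : ℝ≥0∞, 0 < c → c < μ A →
      ∃ B ⊆ A, MeasurableSet B ∧ μ B = c)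
    (D : Set CMPref) (hD : RichSC D) (e : X → CMPref) (he : ∀ x, e x ∈ D)
    (hord : ∀ x y : X, x < y ↔ Prec (e x) (e y))
    (F : X → Bundle) (hFZ : ∀ x, F x ∈ Z)
    (hSP : ∀ x y : X, (e x).R (F x) (F y))
    (hIR : ∀ x, (e x).R (F x) ((0:ℝ), (0:ℝ)))
    (hF0 : F ⊥ = ((0:ℝ), (0:ℝ))) :
    ∀ ε : ℝ, 0 < ε → ∃ G : X → Bundle,
      (Set.range G).Finite ∧ (∀ x, G x ∈ Z) ∧
      (∀ x y : X, (e x).R (G x) (G y)) ∧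
      (∀ x, (e x).R (G x) ((0:ℝ), (0:ℝ))) ∧
      (∫ x, (F x).1 ∂μ) - (∫ x, (G x).1 ∂μ) < ε :=
  stmt13_general μ D hD e he hord F hFZ hSP hF0
end
end
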